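/- The even-degree noncommutative differential forms Ω⁺(A), equipped with the Fedosov product, form an associative algebra, and the quotient of this algebra by the ideal IA := ⊕_{k≥1} Ω^{2k}(A) is isomorphic to A. -/

import Mathlib

/-!
On even forms the grading automorphism `σ` is the identity and `d` lands in odd forms, so the
Fedosov product `x ∘ y = x y - dx dy` of even forms is even, and the Leibniz rule with `d² = 0`
gives `d (x ∘ y) = dx y + x dy`; associativity is then an identity in a noncommutative ring.
The degree-zero projection of an `ℕ`-graded algebra is a ring homomorphism, and it kills the
image of `d` because `d` raises degree, so it is multiplicative for `∘`. Since
`Ω⁺ = Ω⁰ ⊕ IA`, this projection identifies `Ω⁺ / IA` with `Ω⁰ = A`.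
-/

open DirectSum

section GradedPieces

variable {ι R Ω : Type*} [CommSemiring R] [Semiring Ω] [Algebra R Ω]

theorem SetLike.GradedMonoid.iSup_mul_iSup_le [AddMonoid ι] (𝒜 : ι → Submodule R Ω)
    [SetLike.GradedMonoid 𝒜] {κ₁ κ₂ κ₃ : Sort*} {f : κ₁ → ι} {g : κ₂ → ι} {h : κ₃ → ι}
    (hfg : ∀ i j, ∃ k, f i + g j = h k) :
    (⨆ i, 𝒜 (f i)) * (⨆ j, 𝒜 (g j)) ≤ ⨆ k, 𝒜 (h k) := by
  simp only [Submodule.iSup_mul, Submodule.mul_iSup, iSup_le_iff]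
  intro j i
  obtain ⟨k, hk⟩ := hfg i j
  refine le_iSup_of_le k (Submodule.mul_le.2 fun x hx y hy => ?_)
  exact hk ▸ SetLike.GradedMul.mul_mem hx hy

theorem GradedAlgebra.proj_zero_mul [DecidableEq ι] [AddCommMonoid ι] [PartialOrder ι]
    [CanonicallyOrderedAdd ι] (𝒜 : ι → Submodule R Ω) [GradedAlgebra 𝒜] (x y : Ω) :
    GradedAlgebra.proj 𝒜 0 (x * y) = GradedAlgebra.proj 𝒜 0 x * GradedAlgebra.proj 𝒜 0 y :=
  map_mul (GradedRing.projZeroRingHom 𝒜) x y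

end GradedPieces

section EvenOddParts

variable {R Ω : Type*} [CommRing R] [Ring Ω] [Algebra R Ω] (𝒜 : ℕ → Submodule R Ω)

def evenPart : Submodule R Ω := ⨆ k : ℕ, 𝒜 (2 * k)

def oddPart : Submodule R Ω := ⨆ k : ℕ, 𝒜 (2 * k + 1)

def evenPositivePart : Submodule R Ω := ⨆ k : ℕ, 𝒜 (2 * k + 2)

section GradedMonoid

variable [SetLike.GradedMonoid 𝒜]

theorem evenPart_mul_evenPart_le : evenPart 𝒜 * evenPart 𝒜 ≤ evenPart 𝒜 :=
  SetLike.GradedMonoid.iSup_mul_iSup_le 𝒜 fun i j => ⟨i + j, by ring⟩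

theorem oddPart_mul_oddPart_le : oddPart 𝒜 * oddPart 𝒜 ≤ evenPositivePart 𝒜 :=
  SetLike.GradedMonoid.iSup_mul_iSup_le 𝒜 fun i j => ⟨i + j, by ring⟩

end GradedMonoid

theorem evenPart_eq_sup : evenPart 𝒜 = 𝒜 0 ⊔ evenPositivePart 𝒜 :=
  (sup_iSup_nat_succ _).symm

theorem evenPositivePart_le_evenPart : evenPositivePart 𝒜 ≤ evenPart 𝒜 :=
  evenPart_eq_sup 𝒜 ▸ le_sup_right

theorem apply_eq_self_of_mem_evenPart (σ : Ω →ₗ[R] Ω)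
    (hσ : ∀ (n : ℕ) (x : Ω), x ∈ 𝒜 n → σ x = ((-1 : R) ^ n) • x) {x : Ω}
    (hx : x ∈ evenPart 𝒜) : σ x = x := by
  have : evenPart 𝒜 ≤ LinearMap.eqLocus σ LinearMap.id :=
    iSup_le fun k y hy => by simp [hσ _ y hy, pow_mul]
  exact this hx

theorem apply_mem_oddPart_of_mem_evenPart (d : Ω →ₗ[R] Ω)
    (hdeg : ∀ (n : ℕ) (x : Ω), x ∈ 𝒜 n → d x ∈ 𝒜 (n + 1)) {x : Ω}
    (hx : x ∈ evenPart 𝒜) : d x ∈ oddPart 𝒜 := by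
  have : evenPart 𝒜 ≤ (oddPart 𝒜).comap d :=
    iSup_le fun k y hy => Submodule.mem_iSup_of_mem k (hdeg _ y hy)
  exact this hx

section Projection

variable [GradedAlgebra 𝒜]

theorem evenPositivePart_le_ker_proj_zero :
    evenPositivePart 𝒜 ≤ LinearMap.ker (GradedAlgebra.proj 𝒜 0) :=
  iSup_le fun k _ hx => decompose_of_mem_ne 𝒜 hx (by omega)

theorem sub_proj_zero_mem_evenPositivePart {x : Ω} (hx : x ∈ evenPart 𝒜) :
    x - GradedAlgebra.proj 𝒜 0 x ∈ evenPositivePart 𝒜 := by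
  rw [evenPart_eq_sup, Submodule.mem_sup] at hx
  obtain ⟨a, ha, b, hb, rfl⟩ := hx
  have hb0 : GradedAlgebra.proj 𝒜 0 b = 0 := evenPositivePart_le_ker_proj_zero 𝒜 hb
  rw [map_add, hb0, GradedAlgebra.proj_apply, decompose_of_mem_same 𝒜 ha]
  simpa using hb

theorem mem_evenPositivePart_of_proj_zero_eq_zero {x : Ω} (hx : x ∈ evenPart 𝒜)
    (h0 : GradedAlgebra.proj 𝒜 0 x = 0) : x ∈ evenPositivePart 𝒜 := by
  simpa [h0] using sub_proj_zero_mem_evenPositivePart 𝒜 hx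

theorem proj_zero_apply_eq_zero_of_degree_raising (d : Ω →ₗ[R] Ω)
    (hdeg : ∀ (n : ℕ) (x : Ω), x ∈ 𝒜 n → d x ∈ 𝒜 (n + 1)) (x : Ω) :
    GradedAlgebra.proj 𝒜 0 (d x) = 0 := by
  induction x using DirectSum.Decomposition.inductionOn 𝒜 with
  | zero => simp
  | homogeneous y => exact decompose_of_mem_ne 𝒜 (hdeg _ _ y.2) (Nat.succ_ne_zero _)
  | add x y hx hy => rw [map_add, map_add, hx, hy, add_zero]

end Projection

section Fedosov

variable {d : Ω →ₗ[R] Ω}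

theorem fedosov_mem_evenPart [SetLike.GradedMonoid 𝒜] {σ : Ω →ₗ[R] Ω}
    (hσ : ∀ (n : ℕ) (x : Ω), x ∈ 𝒜 n → σ x = ((-1 : R) ^ n) • x)
    (hdeg : ∀ (n : ℕ) (x : Ω), x ∈ 𝒜 n → d x ∈ 𝒜 (n + 1)) {x y : Ω}
    (hx : x ∈ evenPart 𝒜) (hy : y ∈ evenPart 𝒜) : x * y - d (σ x) * d y ∈ evenPart 𝒜 := by
  rw [apply_eq_self_of_mem_evenPart 𝒜 σ hσ hx]
  have hdxdy : d x * d y ∈ oddPart 𝒜 * oddPart 𝒜 :=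
    Submodule.mul_mem_mul (apply_mem_oddPart_of_mem_evenPart 𝒜 d hdeg hx)
      (apply_mem_oddPart_of_mem_evenPart 𝒜 d hdeg hy)
  exact sub_mem (evenPart_mul_evenPart_le 𝒜 (Submodule.mul_mem_mul hx hy))
    (evenPositivePart_le_evenPart 𝒜 (oddPart_mul_oddPart_le 𝒜 hdxdy))

theorem proj_zero_fedosov [GradedAlgebra 𝒜] (σ : Ω → Ω)
    (hdeg : ∀ (n : ℕ) (x : Ω), x ∈ 𝒜 n → d x ∈ 𝒜 (n + 1)) (x y : Ω) :
    GradedAlgebra.proj 𝒜 0 (x * y - d (σ x) * d y)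
      = GradedAlgebra.proj 𝒜 0 x * GradedAlgebra.proj 𝒜 0 y := by
  simp only [map_sub, GradedAlgebra.proj_zero_mul,
    proj_zero_apply_eq_zero_of_degree_raising 𝒜 d hdeg, zero_mul, sub_zero]

variable {σ : Ω → Ω}

theorem d_fedosov_of_apply_eq_self (hd2 : ∀ x, d (d x) = 0)
    (hLeibniz : ∀ x y, d (x * y) = d x * y + σ x * d y) {x : Ω} (hx : σ x = x) (y : Ω) :
    d (x * y - d x * d y) = d x * y + x * d y := by
  rw [map_sub, hLeibniz, hLeibniz, hx, hd2, hd2, zero_mul, mul_zero, add_zero, sub_zero]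

theorem fedosov_assoc_of_apply_eq_self (hd2 : ∀ x, d (d x) = 0)
    (hLeibniz : ∀ x y, d (x * y) = d x * y + σ x * d y) {x y : Ω} (z : Ω) (hx : σ x = x)
    (hy : σ y = y) (hxy : σ (x * y - d (σ x) * d y) = x * y - d (σ x) * d y) :
    x * (y * z - d (σ y) * d z) - d (σ x) * d (y * z - d (σ y) * d z)
      = (x * y - d (σ x) * d y) * z - d (σ (x * y - d (σ x) * d y)) * d z := by
  rw [hxy, hx, hy, d_fedosov_of_apply_eq_self hd2 hLeibniz hx,
    d_fedosov_of_apply_eq_self hd2 hLeibniz hy]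
  noncomm_ring

end Fedosov

end EvenOddParts

/-- The even-degree noncommutative differential forms `Ω⁺(A) = ⨆ k, Ω^{2k}(A)`,
equipped with the Fedosov product `x ∘ y = x*y - (-1)^{|x|} dx dy`, form an
associative algebra (the even part is closed under the Fedosov product and the
product is associative), and the quotient of this algebra by the ideal
`IA = ⨆_{k ≥ 1} Ω^{2k}(A)` is isomorphic to `A = Ω⁰(A)`: the grade-zero
projection `proj` is a surjection onto `Ω⁰(A)` which is multiplicative for
the Fedosov product, and whose kernel on the even part is exactly `IA`. -/
theorem evenForms_fedosov_algebra_quotient {Ω : Type*} [Ring Ω] [Algebra ℂ Ω]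
    (𝒜 : ℕ → Submodule ℂ Ω) [GradedAlgebra 𝒜]
    (σ : Ω →ₐ[ℂ] Ω) (d : Ω →ₗ[ℂ] Ω)
    (hσ : ∀ (n : ℕ) (x : Ω), x ∈ 𝒜 n → σ x = ((-1 : ℂ) ^ n) • x)
    (hdeg : ∀ (n : ℕ) (x : Ω), x ∈ 𝒜 n → d x ∈ 𝒜 (n + 1))
    (hd2 : ∀ x, d (d x) = 0)
    (hLeibniz : ∀ x y, d (x * y) = d x * y + σ x * d y) :
    -- `Even` is Ω⁺(A), `IA` is the ideal of even forms of degree ≥ 2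
    let Even : Submodule ℂ Ω := ⨆ k : ℕ, 𝒜 (2 * k)
    let IA : Submodule ℂ Ω := ⨆ k : ℕ, 𝒜 (2 * k + 2)
    let proj : Ω →ₗ[ℂ] Ω := GradedAlgebra.proj 𝒜 0
    -- Ω⁺(A) is closed under the Fedosov product
    (∀ x ∈ Even, ∀ y ∈ Even, x * y - d (σ x) * d y ∈ Even)
    -- the Fedosov product is associative
    ∧ (∀ x ∈ Even, ∀ y ∈ Even, ∀ z ∈ Even,
        x * (y * z - d (σ y) * d z) - d (σ x) * d (y * z - d (σ y) * d z)
          = (x * y - d (σ x) * d y) * z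
              - d (σ (x * y - d (σ x) * d y)) * d z)
    -- the grade-zero projection is multiplicative for the Fedosov product
    ∧ (∀ x ∈ Even, ∀ y ∈ Even,
        proj (x * y - d (σ x) * d y) = proj x * proj y)
    -- and it is "reduction mod IA": on Ω⁺(A) its kernel is IA and its image is Ω⁰(A),
    -- so (Ω⁺(A), Fedosov) / IA ≅ A
    ∧ (∀ x ∈ Even, x - proj x ∈ IA)
    ∧ (∀ x ∈ Even, proj x = 0 → x ∈ IA)
    ∧ (∀ a ∈ 𝒜 0, a ∈ Even ∧ proj a = a) := by
  intro Even IA proj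
  have hσ_even : ∀ x ∈ Even, σ x = x := fun x hx =>
    apply_eq_self_of_mem_evenPart 𝒜 σ.toLinearMap hσ hx
  have closed : ∀ x ∈ Even, ∀ y ∈ Even, x * y - d (σ x) * d y ∈ Even := fun x hx y hy =>
    fedosov_mem_evenPart 𝒜 (σ := σ.toLinearMap) hσ hdeg hx hy
  refine ⟨closed, fun x hx y hy z _ => ?_, fun x _ y _ => proj_zero_fedosov 𝒜 σ hdeg x y,
    fun x hx => sub_proj_zero_mem_evenPositivePart 𝒜 hx,
    fun x hx h0 => mem_evenPositivePart_of_proj_zero_eq_zero 𝒜 hx h0,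
    fun a ha => ⟨Submodule.mem_iSup_of_mem 0 ha, decompose_of_mem_same 𝒜 ha⟩⟩
  exact fedosov_assoc_of_apply_eq_self hd2 hLeibniz z (hσ_even x hx) (hσ_even y hy)
    (hσ_even _ (closed x hx y hy))
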